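/- arXiv:1704.05232 — 2 statements merged into one kernel-verified Lean document; each statement's English description precedes it below -/
import Mathlib

section
/- There is a universal constant c > 0 such that the following holds. Let d ≥ 2 and let P(S^{d-1}, δ) denote the packing number of the unit sphere in ℝ^d at scale δ. For every ε with 0 < ε < 1/8 and every integer k ≥ 1, there exist arbitrarily large integers n and a family X of n points in ℝ^d (points may be repeated) such that every finite set ξ ⊆ ℝ^d whose k-median cost satisfies Φ(ξ, X) ≤ ε · Δ_k(X) has cardinality |ξ| ≥ c · P(S^{d-1}, 4ε) · k · (log n)/ε. -/
/-!
Place `k` clusters far apart, with centres `4t • e`. Cluster `t` consists of `L` concentric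
spheres of radii `ρ ^ j`, `ρ = (1 - 2ε) / (1 + 2ε)`, each carrying a copy of a maximal
`4ε`-packing `S` of the unit sphere, and a point at radius `ρ ^ j` is repeated about `3 / ρ ^ j`
times, so that every location has mass about `3`. The choice of `ρ` makes the balls of radius
`2ε ρ ^ j` around the `k L |S|` locations pairwise disjoint: a centre set `ξ` meets at most `|ξ|`
of them and each missed location costs at least `6ε`, whereas the `k` cluster centres cost at most
`4` per location. Hence `Φ(ξ, X) ≤ ε Δ_k(X)` forces `|ξ| ≥ k L |S| / 3`. Finally
`n ≤ 4 k L |S| / ρ ^ L` and `-log ρ ≤ 6ε`, so for `L` with `log (4 k |S| L) ≤ ε L` we get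
`log n ≤ 7 ε L`, that is `|ξ| ≥ |S| k log n / (21 ε)`.
-/


/-- Euclidean k-median cost of a family `X : Fin n → ℝ^d` with respect to a finite
(nonempty) center set `C ⊆ ℝ^d`: `Φ(C, X) = Σ_i min_{c ∈ C} ‖X i − c‖`. -/
noncomputable def kmedianCost {d n : ℕ} (C : Finset (EuclideanSpace ℝ (Fin d)))
    (X : Fin n → EuclideanSpace ℝ (Fin d)) : ℝ :=
  ∑ i, sInf ((fun c => dist (X i) c) '' (C : Set (EuclideanSpace ℝ (Fin d))))

/-- Optimal k-median cost `Δ_k(X)`: infimum of `Φ(C, X)` over sets `C ⊆ ℝ^d`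
with `|C| = k`. -/
noncomputable def kmedianOpt {d n : ℕ} (k : ℕ) (X : Fin n → EuclideanSpace ℝ (Fin d)) : ℝ :=
  sInf {r : ℝ | ∃ C : Finset (EuclideanSpace ℝ (Fin d)), C.card = k ∧ kmedianCost C X = r}

/-- Packing number `P(S^{d-1}, δ)` of the unit sphere in `ℝ^d` at scale `δ`. -/
noncomputable def packingNumber (d : ℕ) (δ : ℝ) : ℕ :=
  sSup {m : ℕ | ∃ S : Finset (EuclideanSpace ℝ (Fin d)), S.card = m ∧
    (∀ p ∈ S, ‖p‖ = 1) ∧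
    ∀ x ∈ S, ∀ y ∈ S, x ≠ y → δ ≤ dist x y}

open Finset Filter
open Metric (infDist infDist_eq_iInf infDist_le_dist_of_mem infDist_lt_iff infDist_nonneg)

section KMedianCost

variable {d n : ℕ}

lemma kmedianCost_eq_sum_infDist (C : Finset (EuclideanSpace ℝ (Fin d)))
    (X : Fin n → EuclideanSpace ℝ (Fin d)) :
    kmedianCost C X = ∑ i, infDist (X i) C := by
  simp only [kmedianCost, infDist_eq_iInf, sInf_image']

lemma kmedianOpt_le_kmedianCost {k : ℕ} {C : Finset (EuclideanSpace ℝ (Fin d))} (hC : #C = k)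
    (X : Fin n → EuclideanSpace ℝ (Fin d)) : kmedianOpt k X ≤ kmedianCost C X := by
  refine csInf_le ⟨0, ?_⟩ ⟨C, hC, rfl⟩
  rintro _ ⟨C', -, rfl⟩
  rw [kmedianCost_eq_sum_infDist]
  exact sum_nonneg fun _ _ => infDist_nonneg

end KMedianCost

section Replicate

variable {ι α : Type*} [Fintype ι]

noncomputable def replicateFamily (W : ι → ℕ) (p : ι → α) : Fin (∑ ℓ, W ℓ) → α :=
  fun i => p ((Fintype.equivFinOfCardEq (by simp)).symm i : Σ ℓ, Fin (W ℓ)).1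

lemma sum_replicateFamily {M : Type*} [AddCommMonoid M] (W : ι → ℕ) (p : ι → α) (f : α → M) :
    ∑ i, f (replicateFamily W p i) = ∑ ℓ, W ℓ • f (p ℓ) := by
  simp only [replicateFamily]
  rw [Equiv.sum_comp _ (fun s : Σ ℓ, Fin (W ℓ) => f (p s.1)), Fintype.sum_sigma]
  simp

end Replicate

section DisjointBalls

variable {ι α : Type*} [Fintype ι] [PseudoMetricSpace α] {p : ι → α} {r : ι → ℝ}

lemma card_filter_infDist_lt_le (hsep : Pairwise fun ℓ ℓ' => r ℓ + r ℓ' ≤ dist (p ℓ) (p ℓ'))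
    {ξ : Finset α} (hξ : ξ.Nonempty) : #{ℓ | infDist (p ℓ) ξ < r ℓ} ≤ #ξ := by
  have hserved : ∀ ℓ, infDist (p ℓ) ξ < r ℓ → ∃ c ∈ ξ, dist (p ℓ) c < r ℓ :=
    fun ℓ => (infDist_lt_iff (by simpa using hξ)).1
  have : Nonempty α := ⟨hξ.choose⟩
  choose! f hfξ hf using hserved
  refine card_le_card_of_injOn f (fun ℓ hℓ => hfξ ℓ (mem_filter.1 hℓ).2) fun ℓ hℓ ℓ' hℓ' hff => ?_
  by_contra hne
  have htri := dist_triangle_right (p ℓ) (p ℓ') (f ℓ)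
  have hℓf := hf ℓ (mem_filter.1 hℓ).2
  have hℓ'f := hf ℓ' (mem_filter.1 hℓ').2
  rw [← hff] at hℓ'f
  linarith [hsep hne]

lemma mul_card_sub_card_le_sum_mul_infDist
    (hsep : Pairwise fun ℓ ℓ' => r ℓ + r ℓ' ≤ dist (p ℓ) (p ℓ')) {w : ι → ℝ} (hw : ∀ ℓ, 0 ≤ w ℓ)
    {a : ℝ} (ha : 0 ≤ a) (hwr : ∀ ℓ, a ≤ w ℓ * r ℓ) {ξ : Finset α} (hξ : ξ.Nonempty) :
    a * (Fintype.card ι - #ξ) ≤ ∑ ℓ, w ℓ * infDist (p ℓ) ξ := by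
  set U : Finset ι := {ℓ | r ℓ ≤ infDist (p ℓ) ξ}
  have hU : (Fintype.card ι : ℝ) - #ξ ≤ #U := by
    have hsplit : #{ℓ | infDist (p ℓ) ξ < r ℓ} + #U = Fintype.card ι := by
      simp only [U, ← not_lt]
      exact card_filter_add_card_filter_not _
    have hserved := card_filter_infDist_lt_le hsep hξ
    rw [sub_le_iff_le_add']
    exact_mod_cast (show Fintype.card ι ≤ #ξ + #U by omega)
  calc a * (Fintype.card ι - #ξ) ≤ ∑ _ℓ ∈ U, a := by
        rw [sum_const, nsmul_eq_mul, mul_comm]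
        gcongr
    _ ≤ ∑ ℓ ∈ U, w ℓ * infDist (p ℓ) ξ := sum_le_sum fun ℓ hℓ =>
        (hwr ℓ).trans (by gcongr; exacts [hw ℓ, (mem_filter.1 hℓ).2])
    _ ≤ ∑ ℓ, w ℓ * infDist (p ℓ) ξ :=
        sum_le_sum_of_subset_of_nonneg (subset_univ _) fun ℓ _ _ => mul_nonneg (hw ℓ) infDist_nonneg

end DisjointBalls

section Shells

/-- The ratio for which the gap `ρ ^ j - ρ ^ (j + 1)` between consecutive shells is exactly
`2ε (ρ ^ j + ρ ^ (j + 1))`. -/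
noncomputable def shellRatio (ε : ℝ) : ℝ := (1 - 2 * ε) / (1 + 2 * ε)

variable {ε : ℝ}

lemma shellRatio_pos (hε0 : 0 ≤ ε) (hε : ε < 1 / 2) : 0 < shellRatio ε :=
  div_pos (by linarith) (by linarith)

lemma shellRatio_le_one (hε0 : 0 ≤ ε) : shellRatio ε ≤ 1 :=
  div_le_one_of_le₀ (by linarith) (by linarith)

lemma two_mul_mul_add_pow_shellRatio_le_sub (hε0 : 0 ≤ ε) (hε : ε < 1 / 2) {a b : ℕ}
    (hab : a < b) :
    2 * ε * (shellRatio ε ^ a + shellRatio ε ^ b) ≤ shellRatio ε ^ a - shellRatio ε ^ b := by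
  set ρ := shellRatio ε
  have hρ0 := shellRatio_pos hε0 hε
  have hρ : (1 + 2 * ε) * ρ = 1 - 2 * ε := mul_div_cancel₀ _ (by linarith)
  have hstep : (1 + 2 * ε) * ρ ^ (a + 1) = (1 - 2 * ε) * ρ ^ a := by
    rw [pow_succ, ← hρ]
    ring
  have hb : ρ ^ b ≤ ρ ^ (a + 1) := pow_le_pow_of_le_one hρ0.le (shellRatio_le_one hε0) hab
  nlinarith

lemma two_mul_mul_add_pow_shellRatio_le_abs_sub (hε0 : 0 ≤ ε) (hε : ε < 1 / 2) {a b : ℕ}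
    (hab : a ≠ b) :
    2 * ε * (shellRatio ε ^ a + shellRatio ε ^ b) ≤ |shellRatio ε ^ a - shellRatio ε ^ b| := by
  rcases hab.lt_or_gt with h | h
  · exact (two_mul_mul_add_pow_shellRatio_le_sub hε0 hε h).trans (le_abs_self _)
  · rw [add_comm, abs_sub_comm]
    exact (two_mul_mul_add_pow_shellRatio_le_sub hε0 hε h).trans (le_abs_self _)

lemma neg_log_shellRatio_le (hε0 : 0 ≤ ε) (hε : ε ≤ 1 / 6) : -Real.log (shellRatio ε) ≤ 6 * ε := by
  have hρ0 := shellRatio_pos hε0 (by linarith)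
  have hinv : (shellRatio ε)⁻¹ - 1 = 4 * ε / (1 - 2 * ε) := by
    rw [shellRatio, inv_div, div_sub_one (by linarith)]
    ring
  calc -Real.log (shellRatio ε) = Real.log (shellRatio ε)⁻¹ := (Real.log_inv _).symm
    _ ≤ (shellRatio ε)⁻¹ - 1 := Real.log_le_sub_one_of_pos (inv_pos.2 hρ0)
    _ ≤ 6 * ε := by
      rw [hinv, div_le_iff₀ (by linarith)]
      nlinarith

variable {E : Type*} [NormedAddCommGroup E] [NormedSpace ℝ E]

lemma two_mul_mul_add_pow_shellRatio_le_dist (hε0 : 0 ≤ ε) (hε : ε < 1 / 2) {c c' u u' : E}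
    (hu : ‖u‖ = 1) (hu' : ‖u'‖ = 1) {j j' : ℕ}
    (h : 4 ≤ dist c c' ∨ c = c' ∧ j ≠ j' ∨ c = c' ∧ j = j' ∧ 4 * ε ≤ dist u u') :
    2 * ε * shellRatio ε ^ j + 2 * ε * shellRatio ε ^ j' ≤
      dist (c + shellRatio ε ^ j • u) (c' + shellRatio ε ^ j' • u') := by
  rw [← mul_add]
  set ρ := shellRatio ε
  have hρ0 := shellRatio_pos hε0 hε
  have hnorm : ∀ {i : ℕ} {v : E}, ‖v‖ = 1 → ‖ρ ^ i • v‖ = ρ ^ i := fun hv => by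
    rw [norm_smul, hv, mul_one, Real.norm_of_nonneg (by positivity)]
  rcases h with hfar | ⟨rfl, hjj⟩ | ⟨rfl, rfl, huu⟩
  · have hj : ρ ^ j ≤ 1 := pow_le_one₀ hρ0.le (shellRatio_le_one hε0)
    have hj' : ρ ^ j' ≤ 1 := pow_le_one₀ hρ0.le (shellRatio_le_one hε0)
    have := dist_triangle4 c (c + ρ ^ j • u) (c' + ρ ^ j' • u') c'
    rw [dist_self_add_right, hnorm hu, dist_self_add_left, hnorm hu'] at this
    nlinarith
  · rw [dist_add_left, dist_eq_norm]
    refine (two_mul_mul_add_pow_shellRatio_le_abs_sub hε0 hε hjj).trans ?_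
    simpa only [hnorm hu, hnorm hu'] using abs_norm_sub_norm_le (ρ ^ j • u) (ρ ^ j' • u')
  · rw [dist_add_left, dist_smul₀, Real.norm_of_nonneg (by positivity)]
    nlinarith [pow_pos hρ0 j]

end Shells

section Weights

variable {a x : ℝ}

lemma le_natCeil_div_mul (hx : 0 < x) : a ≤ ⌈a / x⌉₊ * x :=
  (div_le_iff₀ hx).1 (Nat.le_ceil _)

lemma natCeil_div_mul_le (ha : 0 ≤ a) (hx : 0 < x) : ⌈a / x⌉₊ * x ≤ a + x := by
  have := Nat.ceil_lt_add_one (div_nonneg ha hx.le)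
  calc (⌈a / x⌉₊ : ℝ) * x ≤ (a / x + 1) * x := by gcongr
    _ = a + x := by field_simp

end Weights

lemma exists_nat_log_mul_le {ε B : ℝ} (hε : 0 < ε) (hB : 0 < B) (N : ℕ) :
    ∃ L : ℕ, N ≤ L ∧ 0 < L ∧ Real.log (B * L) ≤ ε * L := by
  have hlog : (fun x : ℝ => Real.log (B * x)) =o[atTop] id :=
    (Real.isLittleO_log_id_atTop.comp_tendsto (tendsto_id.const_mul_atTop hB)).trans_isBigO
      (Asymptotics.isBigO_const_mul_self B id atTop)
  obtain ⟨L, hL, hNL⟩ := ((tendsto_natCast_atTop_atTop.eventually (hlog.bound hε)).and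
    (eventually_ge_atTop (N + 1))).exists
  refine ⟨L, by omega, by omega, (le_abs_self _).trans ?_⟩
  simpa using hL

section Packing

open scoped NNReal in
lemma TotallyBounded.exists_card_le_of_le_dist {X : Type*} [PseudoMetricSpace X] {A : Set X}
    (hA : TotallyBounded A) {δ : ℝ} (hδ : 0 < δ) :
    ∃ M : ℕ, ∀ S : Finset X, ↑S ⊆ A → (∀ x ∈ S, ∀ y ∈ S, x ≠ y → δ ≤ dist x y) → #S ≤ M := by
  let η : ℝ≥0 := ⟨δ / 4, by positivity⟩
  have hη : (η : ℝ) = δ / 4 := rfl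
  obtain ⟨C, -, hC, hcover⟩ := Metric.exists_finite_isCover_of_totallyBounded (ε := η)
    (NNReal.coe_pos.1 (hη ▸ by positivity)).ne' hA
  refine ⟨#hC.toFinset, fun S hSA hS => ?_⟩
  have hsep : Metric.IsSeparated (2 * η : ℝ≥0) (S : Set X) := fun x hx y hy hxy => by
    change _ < edist x y
    have hδxy := hS x hx y hy hxy
    rw [edist_dist, ← ENNReal.ofReal_coe_nnreal, ENNReal.ofReal_lt_ofReal_iff (by linarith)]
    push_cast [hη]
    linarith
  have := (hsep.encard_le_packingNumber hSA).trans
    ((Metric.packingNumber_two_mul_le_externalCoveringNumber η A).trans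
      hcover.externalCoveringNumber_le_encard)
  rwa [Set.encard_coe_eq_coe_finsetCard, hC.encard_eq_coe_toFinset_card, Nat.cast_le] at this

variable {d : ℕ} {δ : ℝ}

lemma bddAbove_card_packing (hδ : 0 < δ) :
    BddAbove {m : ℕ | ∃ S : Finset (EuclideanSpace ℝ (Fin d)), #S = m ∧
      (∀ p ∈ S, ‖p‖ = 1) ∧ ∀ x ∈ S, ∀ y ∈ S, x ≠ y → δ ≤ dist x y} := by
  obtain ⟨M, hM⟩ := (isCompact_sphere (0 : EuclideanSpace ℝ (Fin d)) 1).totallyBounded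
    |>.exists_card_le_of_le_dist hδ
  refine ⟨M, ?_⟩
  rintro _ ⟨S, rfl, hS_unit, hS_sep⟩
  exact hM S (fun p hp => mem_sphere_zero_iff_norm.2 (hS_unit p hp)) hS_sep

lemma one_le_packingNumber (hd : 0 < d) (hδ : 0 < δ) : 1 ≤ packingNumber d δ :=
  le_csSup (bddAbove_card_packing hδ)
    ⟨{EuclideanSpace.single ⟨0, hd⟩ 1}, card_singleton _, by simp, by simp⟩

lemma exists_card_eq_packingNumber (hδ : 0 < δ) :
    ∃ S : Finset (EuclideanSpace ℝ (Fin d)), #S = packingNumber d δ ∧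
      (∀ p ∈ S, ‖p‖ = 1) ∧ ∀ x ∈ S, ∀ y ∈ S, x ≠ y → δ ≤ dist x y :=
  Nat.sSup_mem (s := {m : ℕ | ∃ S : Finset (EuclideanSpace ℝ (Fin d)), #S = m ∧
      (∀ p ∈ S, ‖p‖ = 1) ∧ ∀ x ∈ S, ∀ y ∈ S, x ≠ y → δ ≤ dist x y})
    ⟨0, ∅, card_empty, by simp, by simp⟩ (bddAbove_card_packing hδ)

end Packing

section ShellInstance

variable {d : ℕ} {ε : ℝ}

noncomputable def shellLocation (ε : ℝ) (e : EuclideanSpace ℝ (Fin d)) {k L : ℕ}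
    {S : Finset (EuclideanSpace ℝ (Fin d))} (ℓ : Fin k × Fin L × S) : EuclideanSpace ℝ (Fin d) :=
  (4 * (ℓ.1 : ℕ) : ℝ) • e + shellRatio ε ^ (ℓ.2.1 : ℕ) • (ℓ.2.2 : EuclideanSpace ℝ (Fin d))

noncomputable def shellWeight (ε : ℝ) (j : ℕ) : ℕ := ⌈3 / shellRatio ε ^ j⌉₊

noncomputable def shellInstance (ε : ℝ) (e : EuclideanSpace ℝ (Fin d)) (k L : ℕ)
    (S : Finset (EuclideanSpace ℝ (Fin d))) :
    Fin (∑ ℓ : Fin k × Fin L × S, shellWeight ε ℓ.2.1) → EuclideanSpace ℝ (Fin d) :=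
  replicateFamily (ι := Fin k × Fin L × S) (fun ℓ => shellWeight ε ℓ.2.1) (shellLocation ε e)

lemma three_le_shellWeight_mul (hε0 : 0 ≤ ε) (hε : ε < 1 / 2) (j : ℕ) :
    3 ≤ shellWeight ε j * shellRatio ε ^ j :=
  le_natCeil_div_mul (pow_pos (shellRatio_pos hε0 hε) j)

lemma shellWeight_mul_le_four (hε0 : 0 ≤ ε) (hε : ε < 1 / 2) (j : ℕ) :
    shellWeight ε j * shellRatio ε ^ j ≤ 4 := by
  have := pow_le_one₀ (n := j) (shellRatio_pos hε0 hε).le (shellRatio_le_one hε0)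
  calc (shellWeight ε j : ℝ) * shellRatio ε ^ j ≤ 3 + shellRatio ε ^ j :=
        natCeil_div_mul_le (by norm_num) (pow_pos (shellRatio_pos hε0 hε) j)
    _ ≤ 4 := by linarith

variable (k L : ℕ) (S : Finset (EuclideanSpace ℝ (Fin d)))

lemma card_mul_le_sum_shellWeight (hε0 : 0 ≤ ε) (hε : ε < 1 / 2) :
    k * L * #S ≤ ∑ ℓ : Fin k × Fin L × S, shellWeight ε ℓ.2.1 := by
  have hone : ∀ j, 1 ≤ shellWeight ε j := fun j => by
    have := three_le_shellWeight_mul hε0 hε j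
    have := pow_le_one₀ (n := j) (shellRatio_pos hε0 hε).le (shellRatio_le_one hε0)
    have : (1 : ℝ) ≤ shellWeight ε j := by nlinarith
    exact_mod_cast this
  calc k * L * #S = ∑ _ℓ : Fin k × Fin L × S, 1 := by simp [mul_assoc]
    _ ≤ _ := sum_le_sum fun ℓ _ => hone _

lemma sum_shellWeight_le (hε0 : 0 ≤ ε) (hε : ε < 1 / 2) :
    ((∑ ℓ : Fin k × Fin L × S, shellWeight ε ℓ.2.1 : ℕ) : ℝ) ≤
      4 * (k * L * #S) / shellRatio ε ^ L := by
  have hρ0 := shellRatio_pos hε0 hε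
  have hweight : ∀ j < L, (shellWeight ε j : ℝ) ≤ 4 / shellRatio ε ^ L := fun j hj => by
    rw [le_div_iff₀ (pow_pos hρ0 L)]
    calc (shellWeight ε j : ℝ) * shellRatio ε ^ L ≤ shellWeight ε j * shellRatio ε ^ j :=
          mul_le_mul_of_nonneg_left (pow_le_pow_of_le_one hρ0.le (shellRatio_le_one hε0) hj.le)
            (Nat.cast_nonneg _)
      _ ≤ 4 := shellWeight_mul_le_four hε0 hε j
  calc ((∑ ℓ : Fin k × Fin L × S, shellWeight ε ℓ.2.1 : ℕ) : ℝ)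
      ≤ ∑ _ℓ : Fin k × Fin L × S, 4 / shellRatio ε ^ L := by
        push_cast
        exact sum_le_sum fun ℓ _ => hweight _ ℓ.2.1.isLt
    _ = 4 * (k * L * #S) / shellRatio ε ^ L := by
        simp only [sum_const, card_univ, Fintype.card_prod, Fintype.card_fin, Fintype.card_coe,
          nsmul_eq_mul, Nat.cast_mul]
        ring

variable {e : EuclideanSpace ℝ (Fin d)}

lemma pairwise_le_dist_shellLocation (hε0 : 0 ≤ ε) (hε : ε < 1 / 2) (he : ‖e‖ = 1)
    (hS_unit : ∀ u ∈ S, ‖u‖ = 1) (hS_sep : ∀ x ∈ S, ∀ y ∈ S, x ≠ y → 4 * ε ≤ dist x y) :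
    Pairwise fun ℓ ℓ' : Fin k × Fin L × S =>
      2 * ε * shellRatio ε ^ (ℓ.2.1 : ℕ) + 2 * ε * shellRatio ε ^ (ℓ'.2.1 : ℕ) ≤
        dist (shellLocation ε e ℓ) (shellLocation ε e ℓ') := by
  rintro ⟨t, j, u⟩ ⟨t', j', u'⟩ hne
  refine two_mul_mul_add_pow_shellRatio_le_dist hε0 hε (hS_unit _ u.2) (hS_unit _ u'.2) ?_
  by_cases htt : t = t'
  · subst htt
    by_cases hjj : j = j'
    · subst hjj
      refine Or.inr (Or.inr ⟨rfl, rfl, hS_sep _ u.2 _ u'.2 fun huu => hne ?_⟩)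
      rw [Subtype.ext huu]
    · exact Or.inr (Or.inl ⟨rfl, Fin.val_injective.ne hjj⟩)
  · left
    have htt' : (t : ℕ) ≠ t' := Fin.val_injective.ne htt
    rw [dist_eq_norm, ← sub_smul, norm_smul, he, mul_one, Real.norm_eq_abs, ← mul_sub, abs_mul,
      abs_of_pos (by norm_num : (0 : ℝ) < 4)]
    have : (1 : ℝ) ≤ |(t : ℝ) - t'| := by
      exact_mod_cast Int.one_le_abs (sub_ne_zero.2 (Nat.cast_injective.ne htt'))
    linarith

lemma kmedianCost_shellInstance (C : Finset (EuclideanSpace ℝ (Fin d))) :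
    kmedianCost C (shellInstance ε e k L S) =
      ∑ ℓ : Fin k × Fin L × S, shellWeight ε ℓ.2.1 * infDist (shellLocation ε e ℓ) C := by
  rw [kmedianCost_eq_sum_infDist, shellInstance,
    sum_replicateFamily _ _ fun x => infDist x (C : Set (EuclideanSpace ℝ (Fin d)))]
  simp only [nsmul_eq_mul]

lemma kmedianOpt_shellInstance_le (hε0 : 0 ≤ ε) (hε : ε < 1 / 2) (he : ‖e‖ = 1)
    (hS_unit : ∀ u ∈ S, ‖u‖ = 1) :
    kmedianOpt k (shellInstance ε e k L S) ≤ 4 * (k * L * #S) := by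
  set centres := univ.image fun t : Fin k => (4 * (t : ℕ) : ℝ) • e
  have hcentres : #centres = k := by
    refine (card_image_of_injective _ fun t t' htt => Fin.ext ?_).trans (card_fin k)
    have := smul_left_injective ℝ (norm_ne_zero_iff.1 (he ▸ one_ne_zero)) htt
    exact_mod_cast mul_left_cancel₀ four_ne_zero this
  refine (kmedianOpt_le_kmedianCost hcentres _).trans ?_
  rw [kmedianCost_shellInstance]
  calc ∑ ℓ : Fin k × Fin L × S, shellWeight ε ℓ.2.1 * infDist (shellLocation ε e ℓ) centres
      ≤ ∑ _ℓ : Fin k × Fin L × S, (4 : ℝ) := sum_le_sum fun ℓ _ => ?_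
    _ = 4 * (k * L * #S) := by
        simp only [sum_const, card_univ, Fintype.card_prod, Fintype.card_fin, Fintype.card_coe,
          nsmul_eq_mul, Nat.cast_mul]
        ring
  have hdist : infDist (shellLocation ε e ℓ) centres ≤ shellRatio ε ^ (ℓ.2.1 : ℕ) := by
    refine (infDist_le_dist_of_mem (mem_image_of_mem _ (mem_univ ℓ.1))).trans_eq ?_
    rw [shellLocation, dist_self_add_left, norm_smul, hS_unit _ ℓ.2.2.2, mul_one,
      Real.norm_of_nonneg (pow_nonneg (shellRatio_pos hε0 hε).le _)]
  calc shellWeight ε ℓ.2.1 * infDist (shellLocation ε e ℓ) centres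
      ≤ shellWeight ε ℓ.2.1 * shellRatio ε ^ (ℓ.2.1 : ℕ) := by gcongr
    _ ≤ 4 := shellWeight_mul_le_four hε0 hε _

lemma mul_sub_le_kmedianCost_shellInstance (hε0 : 0 ≤ ε) (hε : ε < 1 / 2) (he : ‖e‖ = 1)
    (hS_unit : ∀ u ∈ S, ‖u‖ = 1) (hS_sep : ∀ x ∈ S, ∀ y ∈ S, x ≠ y → 4 * ε ≤ dist x y)
    {ξ : Finset (EuclideanSpace ℝ (Fin d))} (hξ : ξ.Nonempty) :
    6 * ε * (k * L * #S - #ξ) ≤ kmedianCost ξ (shellInstance ε e k L S) := by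
  rw [kmedianCost_shellInstance]
  have := mul_card_sub_card_le_sum_mul_infDist
    (pairwise_le_dist_shellLocation k L S hε0 hε he hS_unit hS_sep)
    (w := fun ℓ => (shellWeight ε ℓ.2.1 : ℝ)) (fun _ => Nat.cast_nonneg _) (a := 6 * ε)
    (by positivity) (fun ℓ => by nlinarith [three_le_shellWeight_mul hε0 hε ℓ.2.1]) hξ
  simpa [mul_assoc] using this

lemma card_le_three_mul_card_of_kmedianCost_le (hε0 : 0 < ε) (hε : ε < 1 / 2) (he : ‖e‖ = 1)
    (hS_unit : ∀ u ∈ S, ‖u‖ = 1) (hS_sep : ∀ x ∈ S, ∀ y ∈ S, x ≠ y → 4 * ε ≤ dist x y)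
    {ξ : Finset (EuclideanSpace ℝ (Fin d))} (hξ : ξ.Nonempty)
    (hcost : kmedianCost ξ (shellInstance ε e k L S) ≤ ε * kmedianOpt k (shellInstance ε e k L S)) :
    (k * L * #S : ℝ) ≤ 3 * #ξ := by
  have hlower := mul_sub_le_kmedianCost_shellInstance k L S hε0.le hε he hS_unit hS_sep hξ
  have hupper := mul_le_mul_of_nonneg_left (kmedianOpt_shellInstance_le k L S hε0.le hε he hS_unit)
    hε0.le
  nlinarith

lemma log_card_shellInstance_le (hε0 : 0 ≤ ε) (hε : ε ≤ 1 / 6) (hk : 0 < k) (hL : 0 < L)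
    (hS : S.Nonempty) :
    Real.log (∑ ℓ : Fin k × Fin L × S, shellWeight ε ℓ.2.1 : ℕ) ≤
      Real.log (4 * k * #S * L) + 6 * ε * L := by
  have hρ0 := shellRatio_pos hε0 (by linarith)
  have hn : (0 : ℝ) < (∑ ℓ : Fin k × Fin L × S, shellWeight ε ℓ.2.1 : ℕ) := by
    have := card_mul_le_sum_shellWeight k L S hε0 (by linarith)
    have : 0 < k * L * #S := by positivity
    exact_mod_cast (by omega : 0 < ∑ ℓ : Fin k × Fin L × S, shellWeight ε ℓ.2.1)
  calc Real.log (∑ ℓ : Fin k × Fin L × S, shellWeight ε ℓ.2.1 : ℕ)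
      ≤ Real.log (4 * k * #S * L / shellRatio ε ^ L) := by
        refine Real.log_le_log hn ((sum_shellWeight_le k L S hε0 (by linarith)).trans_eq ?_)
        ring
    _ = Real.log (4 * k * #S * L) + L * -Real.log (shellRatio ε) := by
        rw [Real.log_div (by positivity) (by positivity), Real.log_pow]
        ring
    _ ≤ Real.log (4 * k * #S * L) + 6 * ε * L := by
        nlinarith [neg_log_shellRatio_le hε0 hε]

end ShellInstance

/-- lower bound for Euclidean k-median. There is a universal
constant `c > 0` such that for every `d ≥ 2`, `0 < ε < 1/8`, `k ≥ 1`, there are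
arbitrarily large `n` and a family `X` of `n` points in `ℝ^d` (repetitions allowed)
such that every finite nonempty set `ξ ⊆ ℝ^d` with `Φ(ξ, X) ≤ ε · Δ_k(X)` has
`|ξ| ≥ c · P(S^{d-1}, 4ε) · k · log n / ε`. -/
theorem kmedian_lower_bound :
    ∃ c : ℝ, 0 < c ∧
      ∀ d : ℕ, 2 ≤ d →
      ∀ ε : ℝ, 0 < ε → ε < 1 / 8 →
      ∀ k : ℕ, 1 ≤ k →
      ∀ N : ℕ, ∃ n : ℕ, N ≤ n ∧
        ∃ X : Fin n → EuclideanSpace ℝ (Fin d),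
          ∀ ξ : Finset (EuclideanSpace ℝ (Fin d)), ξ.Nonempty →
            kmedianCost ξ X ≤ ε * kmedianOpt k X →
            c * (packingNumber d (4 * ε) : ℝ) * k * Real.log n / ε ≤ (ξ.card : ℝ) := by
  refine ⟨1 / 21, by norm_num, fun d hd ε hε0 hε k hk N => ?_⟩
  have hδ : 0 < 4 * ε := by positivity
  obtain ⟨S, hSP, hS_unit, hS_sep⟩ := exists_card_eq_packingNumber (d := d) hδ
  have hS : 0 < #S := hSP ▸ one_le_packingNumber (by omega) hδ
  obtain ⟨e, he⟩ := card_pos.1 hS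
  obtain ⟨L, hNL, hL, hlogL⟩ := exists_nat_log_mul_le hε0 (by positivity : (0 : ℝ) < 4 * k * #S) N
  have hLn : L ≤ k * L * #S := (Nat.le_mul_of_pos_left L hk).trans (Nat.le_mul_of_pos_right _ hS)
  refine ⟨_, hNL.trans (hLn.trans (card_mul_le_sum_shellWeight k L S hε0.le (by linarith))),
    shellInstance ε e k L S, fun ξ hξ hcost => ?_⟩
  have hcard := card_le_three_mul_card_of_kmedianCost_le k L S hε0 (by linarith)
    (hS_unit e he) hS_unit hS_sep hξ hcost
  have hlog := log_card_shellInstance_le k L S hε0.le (by linarith) (by omega) hL ⟨e, he⟩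
  rw [← hSP, div_le_iff₀ hε0]
  calc 1 / 21 * (#S : ℝ) * k * Real.log (∑ ℓ : Fin k × Fin L × S, shellWeight ε ℓ.2.1 : ℕ)
      ≤ 1 / 21 * #S * k * (7 * ε * L) := by gcongr; linarith
    _ = k * L * #S / 3 * ε := by ring
    _ ≤ #ξ * ε := by gcongr; linarith
end

section
/- Let 0 < ε ≤ 1, let k ≥ 1 be an integer, let X be a finite family of points in ℝ^d, and let S ⊆ ℝ^d be a finite nonempty set with Φ(S, X) ≤ (ε²/32) · Δ_k(X). Let g : X → S be a nearest-point assignment, i.e., for every x ∈ X, ‖x − g(x)‖ = min_{s ∈ S} ‖x − s‖, and define the weight function w : S → ℝ by w(s) = |{x ∈ X : g(x) = s}|. Then for every finite set C ⊆ ℝ^d with |C| = k, we have |Φ(C, S, w) − Φ(C, X)| ≤ ε · Φ(C, X); in particular (1 − ε) · Φ(C, X) ≤ Φ(C, S, w) ≤ (1 + ε) · Φ(C, X). -/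
/-- k-means cost of a family `X : Fin n → ℝ^d` with respect to a finite
(nonempty) center set `C ⊆ ℝ^d`: `Φ(C, X) = Σ_i min_{c ∈ C} ‖X i − c‖²`. -/
noncomputable def kmeansCost {d n : ℕ} (C : Finset (EuclideanSpace ℝ (Fin d)))
    (X : Fin n → EuclideanSpace ℝ (Fin d)) : ℝ :=
  ∑ i, sInf ((fun c => dist (X i) c ^ 2) '' (C : Set (EuclideanSpace ℝ (Fin d))))

/-- Optimal k-means cost `Δ_k(X)`: infimum of `Φ(C, X)` over sets `C ⊆ ℝ^d`
with `|C| = k`. -/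
noncomputable def kmeansOpt {d n : ℕ} (k : ℕ) (X : Fin n → EuclideanSpace ℝ (Fin d)) : ℝ :=
  sInf {r : ℝ | ∃ C : Finset (EuclideanSpace ℝ (Fin d)), C.card = k ∧ kmeansCost C X = r}

/-- Weighted k-means cost `Φ(C, S, w) = Σ_{s ∈ S} w(s) · min_{c ∈ C} ‖s − c‖²`. -/
noncomputable def wKmeansCost {d : ℕ} (C S : Finset (EuclideanSpace ℝ (Fin d)))
    (w : EuclideanSpace ℝ (Fin d) → ℝ) : ℝ :=
  ∑ s ∈ S, w s * sInf ((fun c => dist s c ^ 2) '' (C : Set (EuclideanSpace ℝ (Fin d))))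

/-!
Write `δᵢ = ‖xᵢ − g(xᵢ)‖` and let `aᵢ`, `bᵢ` be the distances of `g(xᵢ)` and `xᵢ` to `C`, so that
`Φ(C, S, w) = Σ aᵢ²`, `Φ(C, X) = Σ bᵢ²` and `Φ(S, X) = Σ δᵢ²`. The triangle inequality
`|aᵢ − bᵢ| ≤ δᵢ` gives `|aᵢ² − bᵢ²| ≤ δᵢ² + 2 δᵢ bᵢ`; summing and applying Cauchy–Schwarz,
`|Φ(C, S, w) − Φ(C, X)| ≤ Φ(S, X) + 2 √Φ(S, X) √Φ(C, X)`. Since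
`Φ(S, X) ≤ ε²/32 · Δ_k(X) ≤ ε²/32 · Φ(C, X)`, the right-hand side is at most `ε · Φ(C, X)`.
-/

open Metric Finset

section PseudoMetricSpace

variable {α : Type*} [PseudoMetricSpace α]

lemma sInf_image_comp_dist_eq {f : ℝ → ℝ} (hf : MonotoneOn f (Set.Ici 0)) {C : Finset α}
    (hC : C.Nonempty) (p : α) :
    sInf ((fun c => f (dist p c)) '' (C : Set α)) = f (infDist p C) := by
  obtain ⟨c, hcC, hc⟩ :=
    C.finite_toSet.isCompact.exists_infDist_eq_dist (coe_nonempty.mpr hC) p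
  refine le_antisymm ?_ ?_
  · rw [hc]
    exact csInf_le (C.finite_toSet.image _).bddBelow ⟨c, hcC, rfl⟩
  · refine le_csInf ((coe_nonempty.mpr hC).image _) ?_
    rintro _ ⟨c', hc', rfl⟩
    exact hf infDist_nonneg dist_nonneg (infDist_le_dist_of_mem hc')

/-- For `C = ∅` both sides vanish, by the junk values `sInf ∅ = 0` and `infDist p ∅ = 0`. -/
lemma sInf_image_dist_sq_eq (C : Finset α) (p : α) :
    sInf ((fun c => dist p c ^ 2) '' (C : Set α)) = infDist p C ^ 2 := by
  rcases C.eq_empty_or_nonempty with rfl | hC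
  · simp
  · exact sInf_image_comp_dist_eq (fun x hx _ _ hxy => pow_le_pow_left₀ hx hxy 2) hC p

lemma abs_infDist_sq_sub_infDist_sq_le (C : Set α) (x y : α) :
    |infDist y C ^ 2 - infDist x C ^ 2| ≤ dist x y ^ 2 + 2 * (dist x y * infDist x C) := by
  have hy : infDist y C ≤ infDist x C + dist x y := by
    simpa only [dist_comm] using infDist_le_infDist_add_dist (x := y) (y := x) (s := C)
  have hx : infDist x C ≤ infDist y C + dist x y := infDist_le_infDist_add_dist
  rw [abs_le]
  constructor <;>
    nlinarith [infDist_nonneg (x := x) (s := C), infDist_nonneg (x := y) (s := C),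
      dist_nonneg (x := x) (y := y)]

lemma abs_sum_infDist_sq_sub_le {ι : Type*} (s : Finset ι) (C : Set α) (x y : ι → α) :
    |∑ i ∈ s, infDist (y i) C ^ 2 - ∑ i ∈ s, infDist (x i) C ^ 2| ≤
      ∑ i ∈ s, dist (x i) (y i) ^ 2 +
        2 * (√(∑ i ∈ s, dist (x i) (y i) ^ 2) * √(∑ i ∈ s, infDist (x i) C ^ 2)) := by
  rw [← sum_sub_distrib]
  calc |∑ i ∈ s, (infDist (y i) C ^ 2 - infDist (x i) C ^ 2)|
      _ ≤ ∑ i ∈ s, |infDist (y i) C ^ 2 - infDist (x i) C ^ 2| := abs_sum_le_sum_abs _ _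
      _ ≤ ∑ i ∈ s, (dist (x i) (y i) ^ 2 + 2 * (dist (x i) (y i) * infDist (x i) C)) :=
        sum_le_sum fun i _ => abs_infDist_sq_sub_infDist_sq_le C (x i) (y i)
      _ = ∑ i ∈ s, dist (x i) (y i) ^ 2 + 2 * ∑ i ∈ s, dist (x i) (y i) * infDist (x i) C := by
        rw [sum_add_distrib, ← mul_sum]
      _ ≤ _ := by gcongr; exact Real.sum_mul_le_sqrt_mul_sqrt _ _ _

end PseudoMetricSpace

/-- The constant `32` leaves room for the estimate: `√(1/32) ≤ 3/16` and `1/32 + 3/8 ≤ 1`. -/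
lemma add_two_mul_sqrt_mul_sqrt_le {ε P Q : ℝ} (hε0 : 0 ≤ ε) (hε1 : ε ≤ 1) (hQ : 0 ≤ Q)
    (hPQ : P ≤ ε ^ 2 / 32 * Q) : P + 2 * (√P * √Q) ≤ ε * Q := by
  have hsqrtP : √P ≤ 3 * ε / 16 * √Q := by
    rw [Real.sqrt_le_iff]
    refine ⟨by positivity, ?_⟩
    rw [mul_pow, Real.sq_sqrt hQ]
    nlinarith
  have : √P * √Q ≤ 3 * ε / 16 * Q := by
    calc √P * √Q ≤ 3 * ε / 16 * √Q * √Q := by gcongr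
      _ = 3 * ε / 16 * Q := by rw [mul_assoc, Real.mul_self_sqrt hQ]
  nlinarith [mul_nonneg hε0 hQ]

section KMeans

variable {d n : ℕ}

local notation "E" => EuclideanSpace ℝ (Fin d)

lemma kmeansCost_eq_sum_infDist_sq (C : Finset E) (X : Fin n → E) :
    kmeansCost C X = ∑ i, infDist (X i) C ^ 2 :=
  sum_congr rfl fun i _ => sInf_image_dist_sq_eq C (X i)

lemma kmeansCost_nonneg (C : Finset E) (X : Fin n → E) : 0 ≤ kmeansCost C X := by
  rw [kmeansCost_eq_sum_infDist_sq]
  positivity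

lemma kmeansOpt_le_kmeansCost {k : ℕ} (X : Fin n → E) {C : Finset E} (hC : C.card = k) :
    kmeansOpt k X ≤ kmeansCost C X := by
  refine csInf_le ⟨0, ?_⟩ ⟨C, hC, rfl⟩
  rintro _ ⟨C', _, rfl⟩
  exact kmeansCost_nonneg C' X

lemma wKmeansCost_eq_sum_infDist_sq (C S : Finset E) (g : Fin n → E) (hgS : ∀ i, g i ∈ S)
    (w : E → ℝ) (hw : ∀ s, w s = (Nat.card {i : Fin n // g i = s} : ℝ)) :
    wKmeansCost C S w = ∑ i, infDist (g i) C ^ 2 := by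
  classical
  rw [wKmeansCost, ← sum_fiberwise_of_maps_to (fun i _ => hgS i)]
  refine sum_congr rfl fun s _ => ?_
  rw [sInf_image_dist_sq_eq, hw, Nat.card_eq_fintype_card, Fintype.card_subtype,
    ← nsmul_eq_mul, ← sum_const]
  exact sum_congr rfl fun i hi => by rw [(mem_filter.mp hi).2]

end KMeans

theorem geometric_coreset_is_coreset_general {d n k : ℕ} (ε : ℝ)
    (hε0 : 0 < ε) (hε1 : ε ≤ 1)
    (X : Fin n → EuclideanSpace ℝ (Fin d))
    (S : Finset (EuclideanSpace ℝ (Fin d)))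
    (hcost : kmeansCost S X ≤ ε ^ 2 / 32 * kmeansOpt k X)
    (g : Fin n → EuclideanSpace ℝ (Fin d))
    (hgS : ∀ i, g i ∈ S)
    (hgNear : ∀ i, dist (X i) (g i) =
      sInf ((fun s => dist (X i) s) '' (S : Set (EuclideanSpace ℝ (Fin d)))))
    (w : EuclideanSpace ℝ (Fin d) → ℝ)
    (hw : ∀ s, w s = (Nat.card {i : Fin n // g i = s} : ℝ)) :
    ∀ C : Finset (EuclideanSpace ℝ (Fin d)), C.card = k →
      |wKmeansCost C S w - kmeansCost C X| ≤ ε * kmeansCost C X ∧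
      (1 - ε) * kmeansCost C X ≤ wKmeansCost C S w ∧
      wKmeansCost C S w ≤ (1 + ε) * kmeansCost C X := by
  intro C hC
  have hnear (i : Fin n) : dist (X i) (g i) = infDist (X i) S :=
    (hgNear i).trans (sInf_image_comp_dist_eq monotoneOn_id ⟨g i, hgS i⟩ (X i))
  have hPQ : kmeansCost S X ≤ ε ^ 2 / 32 * kmeansCost C X :=
    hcost.trans (mul_le_mul_of_nonneg_left (kmeansOpt_le_kmeansCost X hC) (by positivity))
  have hmain : |wKmeansCost C S w - kmeansCost C X| ≤ ε * kmeansCost C X :=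
    calc |wKmeansCost C S w - kmeansCost C X|
        _ ≤ kmeansCost S X + 2 * (√(kmeansCost S X) * √(kmeansCost C X)) := by
          simpa only [wKmeansCost_eq_sum_infDist_sq C S g hgS w hw,
            kmeansCost_eq_sum_infDist_sq, hnear] using abs_sum_infDist_sq_sub_le univ (↑C) X g
        _ ≤ ε * kmeansCost C X :=
          add_two_mul_sqrt_mul_sqrt_le hε0.le hε1 (kmeansCost_nonneg C X) hPQ
  obtain ⟨hlower, hupper⟩ := abs_le.mp hmain
  exact ⟨hmain, by linarith, by linarith⟩

/-- geometric coresets are coresets. Let `0 < ε ≤ 1`, `k ≥ 1`,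
let `X` be a family of points in `ℝ^d` and `S ⊆ ℝ^d` a finite nonempty set with
`Φ(S, X) ≤ (ε²/32) · Δ_k(X)`. Let `g` be a nearest-point assignment of points of
`X` to `S`, and let `w(s)` be the number of points of `X` assigned to `s`.
Then for every `C ⊆ ℝ^d` with `|C| = k`,
`|Φ(C, S, w) − Φ(C, X)| ≤ ε · Φ(C, X)`; in particular
`(1 − ε) · Φ(C, X) ≤ Φ(C, S, w) ≤ (1 + ε) · Φ(C, X)`. -/
theorem geometric_coreset_is_coreset {d n k : ℕ} (hk : 1 ≤ k) (ε : ℝ)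
    (hε0 : 0 < ε) (hε1 : ε ≤ 1)
    (X : Fin n → EuclideanSpace ℝ (Fin d))
    (S : Finset (EuclideanSpace ℝ (Fin d))) (hS : S.Nonempty)
    (hcost : kmeansCost S X ≤ ε ^ 2 / 32 * kmeansOpt k X)
    (g : Fin n → EuclideanSpace ℝ (Fin d))
    (hgS : ∀ i, g i ∈ S)
    (hgNear : ∀ i, dist (X i) (g i) =
      sInf ((fun s => dist (X i) s) '' (S : Set (EuclideanSpace ℝ (Fin d)))))
    (w : EuclideanSpace ℝ (Fin d) → ℝ)
    (hw : ∀ s, w s = (Nat.card {i : Fin n // g i = s} : ℝ)) :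
    ∀ C : Finset (EuclideanSpace ℝ (Fin d)), C.card = k →
      |wKmeansCost C S w - kmeansCost C X| ≤ ε * kmeansCost C X ∧
      (1 - ε) * kmeansCost C X ≤ wKmeansCost C S w ∧
      wKmeansCost C S w ≤ (1 + ε) * kmeansCost C X :=
  geometric_coreset_is_coreset_general ε hε0 hε1 X S hcost g hgS hgNear w hw
end
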